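/- (Tail bound for the truncated kernel integral, Lemma) For every c > 0, γ > 0 and R > 0, (1/√(2π))·∫_{ℝ∖[−R,R]} |f̂₂(k;γ,c)| dk = (2e^c/π)·∫_R^∞ e^{−(k²+1)/(4γ²)}/(k²+1) dk < (4e^c/π)·(γ²/R³)·e^{−R²/(4γ²)}. -/

import Mathlib

open MeasureTheory Complex
open scoped Real

noncomputable section

/-- The kernel function `f̂₂(z;γ,c) = √(2/π) · e^{c(1-iz)}/(1+z²) · e^{-(z²+1)/(4γ²)}`. -/
def fhat₂ (γ c : ℝ) (z : ℂ) : ℂ :=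
  (Real.sqrt (2 / Real.pi) : ℂ) * Complex.exp ((c : ℂ) * (1 - Complex.I * z)) / (1 + z ^ 2) *
    Complex.exp (-((z ^ 2 + 1) / (4 * (γ : ℂ) ^ 2)))

lemma abs_fhat (γ c k : ℝ) :
    ‖fhat₂ γ c (k : ℂ)‖ =
      Real.sqrt (2 / Real.pi) * Real.exp c *
        (Real.exp (-((k ^ 2 + 1) / (4 * γ ^ 2))) / (k ^ 2 + 1)) := by
  have h1 : -(((k : ℂ) ^ 2 + 1) / (4 * (γ : ℂ) ^ 2)) =
      ((-((k ^ 2 + 1) / (4 * γ ^ 2)) : ℝ) : ℂ) := by push_cast; ring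
  have h2 : (1 : ℂ) + (k : ℂ) ^ 2 = ((1 + k ^ 2 : ℝ) : ℂ) := by push_cast; ring
  have hk : (0 : ℝ) < 1 + k ^ 2 := by positivity
  unfold fhat₂
  rw [h1, h2, norm_mul, norm_div, norm_mul, Complex.norm_real, Complex.norm_real,
    Complex.norm_exp, Complex.norm_exp, Real.norm_eq_abs, Real.norm_eq_abs]
  have hre : ((c : ℂ) * (1 - Complex.I * (k : ℂ))).re = c := by
    simp [Complex.mul_re, Complex.sub_re, Complex.sub_im]
  rw [hre]
  rw [_root_.abs_of_nonneg (Real.sqrt_nonneg _), _root_.abs_of_pos hk]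
  simp only [Complex.ofReal_re]
  have : (1 : ℝ) + k ^ 2 = k ^ 2 + 1 := by ring
  rw [this]
  ring

lemma tail_int (γ R : ℝ) (hγ : 0 < γ) :
    ∫ x in Set.Ioi R, x * Real.exp (-(x ^ 2 / (4 * γ ^ 2))) =
      2 * γ ^ 2 * Real.exp (-(R ^ 2 / (4 * γ ^ 2))) := by
  have hb : (0 : ℝ) < (4 * γ ^ 2)⁻¹ := by positivity
  have hint : Integrable (fun x : ℝ => x * Real.exp (-(x ^ 2 / (4 * γ ^ 2)))) := by
    have h := integrable_mul_exp_neg_mul_sq hb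
    have he : (fun x : ℝ => x * Real.exp (-(x ^ 2 / (4 * γ ^ 2)))) =
        fun x : ℝ => x * Real.exp (-(4 * γ ^ 2)⁻¹ * x ^ 2) := by
      funext x; congr 1; congr 1; ring
    rw [he]; exact h
  have key := integral_Ioi_of_hasDerivAt_of_tendsto
    (f := fun x : ℝ => -(2 * γ ^ 2 * Real.exp (-(x ^ 2 / (4 * γ ^ 2)))))
    (f' := fun x : ℝ => x * Real.exp (-(x ^ 2 / (4 * γ ^ 2)))) (a := R) (m := 0)
    ?_ ?_ hint.integrableOn ?_
  · rw [key]; ring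
  · exact (by fun_prop : Continuous fun x : ℝ =>
      -(2 * γ ^ 2 * Real.exp (-(x ^ 2 / (4 * γ ^ 2))))).continuousWithinAt
  · intro x _
    have h1 : HasDerivAt (fun x : ℝ => -(x ^ 2 / (4 * γ ^ 2))) (-(2 * x / (4 * γ ^ 2))) x := by
      have := ((hasDerivAt_pow 2 x).div_const (4 * γ ^ 2)).neg
      exact this.congr_deriv (by norm_num)
    have h2 := h1.exp
    have h3 := (h2.const_mul (2 * γ ^ 2)).neg
    convert h3 using 1
    · exact rfl
    field_simp
    ring
  · have hx2 : Filter.Tendsto (fun x : ℝ => x ^ 2 / (4 * γ ^ 2)) Filter.atTop Filter.atTop :=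
      (Filter.tendsto_pow_atTop two_ne_zero).atTop_div_const (by positivity)
    have h := ((Real.tendsto_exp_atBot.comp (Filter.tendsto_neg_atTop_atBot.comp hx2)).const_mul
      (2 * γ ^ 2)).neg
    simpa using h

/-- **Tail bound for the truncated kernel integral (Lemma).** -/
theorem kernel_tail_bound (c γ R : ℝ) (hc : 0 < c) (hγ : 0 < γ) (hR : 0 < R) :
    (Real.sqrt (2 * Real.pi))⁻¹ *
        (∫ k in (Set.Icc (-R) R)ᶜ, ‖fhat₂ γ c (k : ℂ)‖) =
      (2 * Real.exp c / Real.pi) *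
        (∫ k in Set.Ioi R, Real.exp (-((k ^ 2 + 1) / (4 * γ ^ 2))) / (k ^ 2 + 1)) ∧
    (2 * Real.exp c / Real.pi) *
        (∫ k in Set.Ioi R, Real.exp (-((k ^ 2 + 1) / (4 * γ ^ 2))) / (k ^ 2 + 1)) <
      (4 * Real.exp c / Real.pi) * (γ ^ 2 / R ^ 3) * Real.exp (-(R ^ 2 / (4 * γ ^ 2))) := by
  have hπ : (0 : ℝ) < Real.pi := Real.pi_pos
  have hb : (0 : ℝ) < (4 * γ ^ 2)⁻¹ := by positivity
  set g : ℝ → ℝ := fun k => Real.exp (-((k ^ 2 + 1) / (4 * γ ^ 2))) / (k ^ 2 + 1) with hg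
  have hgcont : Continuous g := by
    apply Continuous.div (by fun_prop) (by fun_prop)
    intro x; positivity
  have hgint : Integrable g := by
    apply Integrable.mono' (integrable_exp_neg_mul_sq hb) hgcont.aestronglyMeasurable
    filter_upwards with k
    have hg0 : 0 ≤ g k := by positivity
    rw [Real.norm_of_nonneg hg0]
    have h1 : g k ≤ Real.exp (-((k ^ 2 + 1) / (4 * γ ^ 2))) :=
      div_le_self (Real.exp_nonneg _) (by nlinarith [sq_nonneg k])
    refine h1.trans (Real.exp_le_exp.mpr ?_)
    have h4 : (0:ℝ) < 4 * γ ^ 2 := by positivity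
    rw [div_eq_mul_inv]
    nlinarith [hb, sq_nonneg k]
  constructor
  · -- Part 1: equality
    have habs : ∀ k : ℝ, ‖fhat₂ γ c (k : ℂ)‖ =
        Real.sqrt (2 / Real.pi) * Real.exp c * g k := fun k => abs_fhat γ c k
    simp only [habs]
    have hcompl : (Set.Icc (-R) R)ᶜ = Set.Iio (-R) ∪ Set.Ioi R := by
      ext x
      simp only [Set.mem_compl_iff, Set.mem_Icc, not_and_or, not_le, Set.mem_union,
        Set.mem_Iio, Set.mem_Ioi]
    rw [hcompl, setIntegral_union (by
        apply Set.disjoint_left.mpr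
        intro x hx hx'
        simp only [Set.mem_Iio, Set.mem_Ioi] at hx hx'
        linarith) measurableSet_Ioi
      ((hgint.const_mul _).integrableOn) ((hgint.const_mul _).integrableOn)]
    have hsym : (∫ k in Set.Iio (-R), Real.sqrt (2 / Real.pi) * Real.exp c * g k) =
        ∫ k in Set.Ioi R, Real.sqrt (2 / Real.pi) * Real.exp c * g k := by
      rw [← MeasureTheory.integral_Iic_eq_integral_Iio, ← integral_comp_neg_Ioi]
      congr 1
      funext k
      simp only [hg, neg_sq]
    rw [hsym, MeasureTheory.integral_const_mul]
    have hne : Real.sqrt (2 * Real.pi) ≠ 0 := by positivity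
    have hsq : Real.sqrt (2 * Real.pi) * Real.sqrt (2 * Real.pi) = 2 * Real.pi :=
      Real.mul_self_sqrt (by positivity)
    have hmul : Real.sqrt (2 * Real.pi) * Real.sqrt (2 / Real.pi) = 2 := by
      rw [← Real.sqrt_mul (by positivity)]
      rw [show (2 * Real.pi) * (2 / Real.pi) = 2 ^ 2 by field_simp]
      exact Real.sqrt_sq (by norm_num)
    have hs : Real.sqrt (2 / Real.pi) = 2 / Real.sqrt (2 * Real.pi) := by
      rw [eq_div_iff hne, mul_comm]
      exact hmul
    have hscal : (Real.sqrt (2 * Real.pi))⁻¹ * (2 * (Real.sqrt (2 / Real.pi) * Real.exp c)) =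
        2 * Real.exp c / Real.pi := by
      have h2 : Real.sqrt 2 * Real.sqrt 2 = 2 := Real.mul_self_sqrt (by norm_num)
      have hπ2 : Real.sqrt Real.pi * Real.sqrt Real.pi = Real.pi := Real.mul_self_sqrt hπ.le
      rw [hs]
      field_simp
      linear_combination (-1) * hsq
    rw [← hscal]
    ring
  · -- Part 2: strict inequality
    set D : ℝ := Real.exp (-(1 / (4 * γ ^ 2))) / R ^ 3 with hD
    have hint2 : Integrable (fun x : ℝ => x * Real.exp (-(x ^ 2 / (4 * γ ^ 2)))) := by
      have h := integrable_mul_exp_neg_mul_sq hb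
      have he : (fun x : ℝ => x * Real.exp (-(x ^ 2 / (4 * γ ^ 2)))) =
          fun x : ℝ => x * Real.exp (-(4 * γ ^ 2)⁻¹ * x ^ 2) := by
        funext x; congr 1; congr 1; ring
      rw [he]; exact h
    have hmono : (∫ k in Set.Ioi R, g k) ≤
        ∫ k in Set.Ioi R, D * (k * Real.exp (-(k ^ 2 / (4 * γ ^ 2)))) := by
      apply setIntegral_mono_on hgint.integrableOn (hint2.const_mul D).integrableOn
        measurableSet_Ioi
      intro k hk
      have hk' : R < k := hk
      have hsplit : Real.exp (-((k ^ 2 + 1) / (4 * γ ^ 2))) =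
          Real.exp (-(1 / (4 * γ ^ 2))) * Real.exp (-(k ^ 2 / (4 * γ ^ 2))) := by
        rw [← Real.exp_add]; congr 1; ring
      have h1 : (1 : ℝ) / (k ^ 2 + 1) ≤ k / R ^ 3 := by
        rw [div_le_div_iff₀ (by positivity) (by positivity)]
        nlinarith [pow_lt_pow_left₀ hk' hR.le three_ne_zero]
      calc g k = Real.exp (-(1 / (4 * γ ^ 2))) * Real.exp (-(k ^ 2 / (4 * γ ^ 2))) *
            (1 / (k ^ 2 + 1)) := by rw [hg]; simp only []; rw [hsplit]; ring
        _ ≤ Real.exp (-(1 / (4 * γ ^ 2))) * Real.exp (-(k ^ 2 / (4 * γ ^ 2))) * (k / R ^ 3) :=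
            mul_le_mul_of_nonneg_left h1 (by positivity)
        _ = D * (k * Real.exp (-(k ^ 2 / (4 * γ ^ 2)))) := by rw [hD]; ring
    rw [MeasureTheory.integral_const_mul, tail_int γ R hγ] at hmono
    have hexp1 : Real.exp (-(1 / (4 * γ ^ 2))) < 1 := by
      rw [Real.exp_lt_one_iff]
      exact neg_lt_zero.mpr (by positivity)
    have hpos : (0 : ℝ) < (4 * Real.exp c / Real.pi) * (γ ^ 2 / R ^ 3) *
        Real.exp (-(R ^ 2 / (4 * γ ^ 2))) := by positivity
    have hstep : (2 * Real.exp c / Real.pi) * (∫ k in Set.Ioi R, g k) ≤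
        (2 * Real.exp c / Real.pi) *
          (D * (2 * γ ^ 2 * Real.exp (-(R ^ 2 / (4 * γ ^ 2))))) :=
      mul_le_mul_of_nonneg_left hmono (by positivity)
    have heq : (2 * Real.exp c / Real.pi) *
          (D * (2 * γ ^ 2 * Real.exp (-(R ^ 2 / (4 * γ ^ 2))))) =
        Real.exp (-(1 / (4 * γ ^ 2))) * ((4 * Real.exp c / Real.pi) * (γ ^ 2 / R ^ 3) *
          Real.exp (-(R ^ 2 / (4 * γ ^ 2)))) := by
      rw [hD]; ring
    refine lt_of_le_of_lt hstep ?_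
    rw [heq]
    exact mul_lt_of_lt_one_left hpos hexp1
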